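/- If L0ψ = 0 and L1ψ = 0 for the hyper-CR Lax pair with ψ = Σ_{i≥0} λ^i ψ_i a formal power series in λ whose coefficients ψ_i depend only on (X,Y,T), then each coefficient ψ_i satisfies the second-order linear PDE ∂_X∂_T ψ_i − ∂_Y² ψ_i + H_Y ∂_X² ψ_i − H_X ∂_X ∂_Y ψ_i = 0, provided H satisfies the hyper-CR equation. -/

import Mathlib

noncomputable section

abbrev Pt3 := Fin 3 → ℝ

/-- Partial derivative in the `j`-th coordinate direction. -/
def pd (j : Fin 3) (f : Pt3 → ℝ) (p : Pt3) : ℝ :=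
  fderiv ℝ f p (Pi.single j 1)

/-- The hyper-CR expression H_{XT} − H_{YY} + H_Y H_{XX} − H_X H_{XY};
coordinates (X,Y,T) = (0,1,2). -/
def hyperCR (H : Pt3 → ℝ) (p : Pt3) : ℝ :=
  pd 0 (fun q => pd 2 H q) p - pd 1 (fun q => pd 1 H q) p
    + pd 1 H p * pd 0 (fun q => pd 0 H q) p
    - pd 0 H p * pd 0 (fun q => pd 1 H q) p


lemma pd_contDiff {f : Pt3 → ℝ} (hf : ContDiff ℝ (⊤ : ℕ∞) f) (j : Fin 3) :
    ContDiff ℝ (⊤ : ℕ∞) (pd j f) := by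
  have h := (hf.fderiv_right (m := (⊤ : ℕ∞)) (by simp)).clm_apply
    (contDiff_const (c := (Pi.single j 1 : Pt3)))
  exact h

lemma pd_apply_eq {f : Pt3 → ℝ} (hf : ContDiff ℝ (⊤ : ℕ∞) f) (i j : Fin 3) (p : Pt3) :
    pd i (pd j f) p = fderiv ℝ (fderiv ℝ f) p (Pi.single i 1) (Pi.single j 1) := by
  have hd : DifferentiableAt ℝ (fderiv ℝ f) p :=
    ((hf.fderiv_right (m := (⊤ : ℕ∞)) (by simp)).differentiable (by simp)) p
  unfold pd
  rw [fderiv_clm_apply hd (differentiableAt_const _)]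
  simp

lemma pd_symm {f : Pt3 → ℝ} (hf : ContDiff ℝ (⊤ : ℕ∞) f) (i j : Fin 3) (p : Pt3) :
    pd i (pd j f) p = pd j (pd i f) p := by
  rw [pd_apply_eq hf, pd_apply_eq hf]
  exact second_derivative_symmetric
    (fun y => (hf.differentiable (by simp) y).hasFDerivAt)
    (((hf.fderiv_right (m := (⊤ : ℕ∞)) (by simp)).differentiable (by simp)) p).hasFDerivAt _ _

lemma pd_add {a b : Pt3 → ℝ} (ha : ContDiff ℝ (⊤ : ℕ∞) a) (hb : ContDiff ℝ (⊤ : ℕ∞) b)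
    (j : Fin 3) (p : Pt3) :
    pd j (fun q => a q + b q) p = pd j a p + pd j b p := by
  unfold pd
  rw [fderiv_fun_add (ha.differentiable (by simp) p) (hb.differentiable (by simp) p)]
  simp

lemma pd_mul {a b : Pt3 → ℝ} (ha : ContDiff ℝ (⊤ : ℕ∞) a) (hb : ContDiff ℝ (⊤ : ℕ∞) b)
    (j : Fin 3) (p : Pt3) :
    pd j (fun q => a q * b q) p = pd j a p * b p + a p * pd j b p := by
  unfold pd
  rw [fderiv_fun_mul (ha.differentiable (by simp) p) (hb.differentiable (by simp) p)]
  simp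
  ring

/-- If ψ = Σ λ^i ψ_i solves L0ψ = L1ψ = 0 for the hyper-CR Lax pair
L0 = ∂_Y − λ(∂_T + H_Y ∂_X), L1 = ∂_X − λ(∂_Y + H_X ∂_X) (as a formal power
series in λ, i.e. the recursion relations below hold), and H satisfies the
hyper-CR equation, then every coefficient ψ_i satisfies
∂_X∂_T ψ_i − ∂_Y²ψ_i + H_Y ∂_X²ψ_i − H_X ∂_X∂_Y ψ_i = 0.
Coordinates (X,Y,T) = (0,1,2). -/
theorem stmt6 (H : Pt3 → ℝ) (hH : ContDiff ℝ (⊤ : ℕ∞) H)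
    (hcr : ∀ p : Pt3, hyperCR H p = 0)
    (ψ : ℕ → Pt3 → ℝ) (hψ : ∀ i, ContDiff ℝ (⊤ : ℕ∞) (ψ i))
    (h0Y : ∀ p : Pt3, pd 1 (ψ 0) p = 0)
    (h0X : ∀ p : Pt3, pd 0 (ψ 0) p = 0)
    (hrec0 : ∀ i : ℕ, ∀ p : Pt3,
      pd 1 (ψ (i + 1)) p = pd 2 (ψ i) p + pd 1 H p * pd 0 (ψ i) p)
    (hrec1 : ∀ i : ℕ, ∀ p : Pt3,
      pd 0 (ψ (i + 1)) p = pd 1 (ψ i) p + pd 0 H p * pd 0 (ψ i) p) :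
    ∀ i : ℕ, ∀ p : Pt3,
      pd 0 (fun q => pd 2 (ψ i) q) p - pd 1 (fun q => pd 1 (ψ i) q) p
        + pd 1 H p * pd 0 (fun q => pd 0 (ψ i) q) p
        - pd 0 H p * pd 1 (fun q => pd 0 (ψ i) q) p = 0 := by
  intro i p
  have key : pd 0 (pd 1 (ψ (i+1))) p = pd 1 (pd 0 (ψ (i+1))) p :=
    pd_symm (hψ _) 0 1 p
  have e0 : pd 1 (ψ (i+1)) = fun q => pd 2 (ψ i) q + pd 1 H q * pd 0 (ψ i) q :=
    funext (hrec0 i)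
  have e1 : pd 0 (ψ (i+1)) = fun q => pd 1 (ψ i) q + pd 0 H q * pd 0 (ψ i) q :=
    funext (hrec1 i)
  rw [e0, e1] at key
  rw [pd_add (pd_contDiff (hψ i) 2) ((pd_contDiff hH 1).mul (pd_contDiff (hψ i) 0)),
      pd_mul (pd_contDiff hH 1) (pd_contDiff (hψ i) 0),
      pd_add (pd_contDiff (hψ i) 1) ((pd_contDiff hH 0).mul (pd_contDiff (hψ i) 0)),
      pd_mul (pd_contDiff hH 0) (pd_contDiff (hψ i) 0)] at key
  have hsym : pd 0 (pd 1 H) p = pd 1 (pd 0 H) p := pd_symm hH 0 1 p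
  show pd 0 (pd 2 (ψ i)) p - pd 1 (pd 1 (ψ i)) p
        + pd 1 H p * pd 0 (pd 0 (ψ i)) p
        - pd 0 H p * pd 1 (pd 0 (ψ i)) p = 0
  rw [hsym] at key
  linarith [key]
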